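/- Let S = {1,…,n}, Δ the simplex on S, Λ the logit map, and D_KL the Kullback–Leibler divergence. Then for every x* ∈ Δ and all y, y' ∈ ℝ^n, writing x = Λ(y) and x' = Λ(y'), we have D_KL(x*, x') ≤ D_KL(x*, x) + ⟨y' − y, x − x*⟩ + (1/2)‖y' − y‖_∞², where ⟨·,·⟩ is the standard inner product on ℝ^n and ‖·‖_∞ the sup-norm. -/

import Mathlib

/-!
Write `x = Λ(y)`, `x' = Λ(y')` and `δ = y' - y`. Since `log Λ_s(y) = y_s - log Σ_t e^{y_t}`, the
divergences differ by an affine term plus a log-partition ratio: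
`D(x*, x') - D(x*, x) = ⟨x*, y - y'⟩ + log Σ_s x_s e^{δ_s}`.
Hoeffding's lemma for the random variable `δ` under the law `x`, which takes values in
`[-‖δ‖_∞, ‖δ‖_∞]`, bounds the last term by `⟨x, δ⟩ + ‖δ‖_∞² / 2`.
-/

open Real Finset Filter Topology

noncomputable section

/-- The logit (exponential weights) map. -/
def logit {α : Type*} [Fintype α] (y : α → ℝ) : α → ℝ :=
  fun a => Real.exp (y a) / ∑ b, Real.exp (y b)

/-- The Kullback–Leibler divergence on the simplex (with `0 · log 0 = 0`). -/
def klDiv {α : Type*} [Fintype α] (xstar x : α → ℝ) : ℝ :=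
  ∑ s, xstar s * Real.log (xstar s / x s)

open MeasureTheory ProbabilityTheory

theorem PMF.integral_ofFintype_ofReal {α : Type*} [Fintype α] [MeasurableSpace α]
    [MeasurableSingletonClass α] (w : α → ℝ) (hw : ∀ s, 0 ≤ w s)
    (hw1 : ∑ s, ENNReal.ofReal (w s) = 1) (f : α → ℝ) :
    ∫ s, f s ∂(PMF.ofFintype _ hw1).toMeasure = ∑ s, w s * f s := by
  simp [PMF.integral_eq_sum, ENNReal.toReal_ofReal (hw _)]

/-- Hoeffding's lemma for a finitely supported law `w`. -/
theorem log_sum_mul_exp_le {α : Type*} [Fintype α] (w δ : α → ℝ) (hw : ∀ s, 0 ≤ w s)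
    (hw1 : ∑ s, w s = 1) {b : ℝ} (hb : ∀ s, |δ s| ≤ b) :
    log (∑ s, w s * exp (δ s)) ≤ ∑ s, w s * δ s + b ^ 2 / 2 := by
  let : MeasurableSpace α := ⊤
  have hp : ∑ s, ENNReal.ofReal (w s) = 1 := by
    rw [← ENNReal.ofReal_sum_of_nonneg fun s _ => hw s, hw1, ENNReal.ofReal_one]
  set μ := (PMF.ofFintype _ hp).toMeasure
  set m := ∑ s, w s * δ s
  have hoeffding := (hasSubgaussianMGF_of_mem_Icc (μ := μ) (X := δ) (a := -b) (b := b)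
    Measurable.of_discrete.aemeasurable (ae_of_all _ fun s => abs_le.mp (hb s))).mgf_le 1
  have hc : (((‖b - -b‖₊ / 2) ^ 2 : NNReal) : ℝ) = b ^ 2 := by
    simp [sub_neg_eq_add, ← two_mul]
  rw [mgf, PMF.integral_ofFintype_ofReal w hw hp, PMF.integral_ofFintype_ofReal w hw hp, hc]
    at hoeffding
  have hpos : 0 < ∑ s, w s * exp (δ s) := by
    obtain ⟨s, -, hs⟩ := exists_lt_of_sum_lt (s := univ) (f := 0) (g := w) (by simp [hw1])
    refine sum_pos' (fun s _ => mul_nonneg (hw s) (exp_pos _).le) ⟨s, mem_univ s, ?_⟩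
    exact mul_pos hs (exp_pos _)
  rw [log_le_iff_le_exp hpos, exp_add]
  calc ∑ s, w s * exp (δ s) = exp m * ∑ s, w s * exp (1 * (δ s - m)) := by
        rw [mul_sum]; congr! 1; rw [one_mul, exp_sub]; field_simp
    _ ≤ exp m * exp (b ^ 2 / 2) := by gcongr; simpa using hoeffding

section logit

variable {α : Type*} [Fintype α]

theorem sum_exp_pos [Nonempty α] (y : α → ℝ) : 0 < ∑ s, exp (y s) :=
  sum_pos (fun _ _ => exp_pos _) univ_nonempty

theorem logit_pos (y : α → ℝ) (s : α) : 0 < logit y s :=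
  have : Nonempty α := ⟨s⟩
  div_pos (exp_pos _) (sum_exp_pos y)

theorem sum_logit [Nonempty α] (y : α → ℝ) : ∑ s, logit y s = 1 := by
  simp only [logit, ← sum_div, div_self (sum_exp_pos y).ne']

theorem log_logit (y : α → ℝ) (s : α) : log (logit y s) = y s - log (∑ t, exp (y t)) := by
  have : Nonempty α := ⟨s⟩
  rw [logit, log_div (exp_ne_zero _) (sum_exp_pos y).ne', log_exp]

theorem klDiv_logit (xstar : α → ℝ) (hsum : ∑ s, xstar s = 1) (y : α → ℝ) :
    klDiv xstar (logit y) =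
      ∑ s, xstar s * log (xstar s) - ∑ s, xstar s * y s + log (∑ s, exp (y s)) := by
  have hterm (s : α) : xstar s * log (xstar s / logit y s) =
      xstar s * log (xstar s) - xstar s * y s + xstar s * log (∑ t, exp (y t)) := by
    rcases eq_or_ne (xstar s) 0 with h0 | h0
    · simp [h0]
    · rw [log_div h0 (logit_pos y s).ne', log_logit]
      ring
  rw [klDiv, sum_congr rfl fun s _ => hterm s, sum_add_distrib, sum_sub_distrib, ← sum_mul,
    hsum, one_mul]

theorem sum_logit_mul_exp_sub (y y' : α → ℝ) :
    ∑ s, logit y s * exp (y' s - y s) = (∑ s, exp (y' s)) / ∑ s, exp (y s) := by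
  rw [sum_div]
  refine sum_congr rfl fun s _ => ?_
  rw [logit, exp_sub]
  field_simp

end logit

theorem klDiv_logit_one_step_bound_general
    {α : Type*} [Fintype α] [Nonempty α]
    (xstar : α → ℝ) (hsum : ∑ s, xstar s = 1)
    (y y' : α → ℝ) :
    klDiv xstar (logit y') ≤
      klDiv xstar (logit y) + (∑ s, (y' s - y s) * (logit y s - xstar s)) +
        (1 / 2) * ‖y' - y‖ ^ 2 := by
  have hlog_ratio : log (∑ s, exp (y' s)) =
      log (∑ s, exp (y s)) + log (∑ s, logit y s * exp (y' s - y s)) := by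
    rw [sum_logit_mul_exp_sub, log_div (sum_exp_pos y').ne' (sum_exp_pos y).ne']
    ring
  have hoeffding := log_sum_mul_exp_le (logit y) (y' - y) (fun s => (logit_pos y s).le)
    (sum_logit y) (b := ‖y' - y‖) fun s => by
      simpa only [Real.norm_eq_abs] using norm_le_pi_norm (y' - y) s
  simp only [Pi.sub_apply] at hoeffding
  rw [klDiv_logit xstar hsum, klDiv_logit xstar hsum, hlog_ratio]
  have hsplit : ∑ s, (y' s - y s) * (logit y s - xstar s) =
      ∑ s, logit y s * (y' s - y s) - ∑ s, xstar s * y' s + ∑ s, xstar s * y s := by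
    simp only [← sum_sub_distrib, ← sum_add_distrib]
    exact sum_congr rfl fun s _ => by ring
  linarith

/-- For all `x* ∈ Δ` and `y, y' ∈ ℝ^n`, writing `x = Λ(y)`, `x' = Λ(y')`:
`D_KL(x*, x') ≤ D_KL(x*, x) + ⟨y' − y, x − x*⟩ + ½ ‖y' − y‖_∞²`.
(Here `‖·‖` on `α → ℝ` is the sup-norm, via the `Pi` norm instance.) -/
theorem klDiv_logit_one_step_bound
    {α : Type*} [Fintype α] [Nonempty α]
    (xstar : α → ℝ) (hpos : ∀ s, 0 ≤ xstar s) (hsum : ∑ s, xstar s = 1)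
    (y y' : α → ℝ) :
    klDiv xstar (logit y') ≤
      klDiv xstar (logit y) + (∑ s, (y' s - y s) * (logit y s - xstar s)) +
        (1 / 2) * ‖y' - y‖ ^ 2 :=
  klDiv_logit_one_step_bound_general xstar hsum y y'
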